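/- Let C̄ : (−1/2, 1/2) → (self-adjoint linear maps Sym₂ → Sym₂) be measurable and essentially bounded, with C̄(t)Ā·Ā ≥ c|Ā|² for a.e. t and all Ā ∈ Sym₂, where c > 0. Define C̄⁽ⁱ⁾ := ∫_{−1/2}^{1/2} tⁱ C̄(t) dt for i = 0, 1, 2, and Ĉ := 12( C̄⁽²⁾ − C̄⁽¹⁾(C̄⁽⁰⁾)⁻¹C̄⁽¹⁾ ). Then ĈĀ·Ā ≥ c|Ā|² for every Ā ∈ Sym₂; in particular Ĉ is positive definite and invertible. -/

import Mathlib

open Matrix MeasureTheory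
open scoped BigOperators

noncomputable section

/-- The space of real 2×2 matrices; symmetric ones form `Sym₂`. -/
abbrev M2 : Type := Matrix (Fin 2) (Fin 2) ℝ

/-- The Frobenius pairing `A·B := tr (A*B)`. -/
def dot2 (A B : M2) : ℝ := (A * B).trace

/-- The interval `(−1/2, 1/2)`. -/
def Ioo2 : Set ℝ := Set.Ioo (-(1:ℝ)/2) (1/2)

/-!
Put `B := (C̄⁽⁰⁾)⁻¹ C̄⁽¹⁾ Ā`. Integrating the pointwise coercivity
`c |tĀ − B|² ≤ C̄(t)(tĀ − B)·(tĀ − B)` over `(−1/2, 1/2)`, with `∫ t² = 1/12` and `∫ t = 0`, gives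
`c |Ā|²/12 + c |B|² ≤ C̄⁽²⁾Ā·Ā − C̄⁽¹⁾Ā·B − C̄⁽¹⁾B·Ā + C̄⁽⁰⁾B·B`, and `C̄⁽⁰⁾B = C̄⁽¹⁾Ā` cancels the
last term against the second, leaving `C̄⁽²⁾Ā·Ā − C̄⁽¹⁾B·Ā = ĈĀ·Ā / 12`.
Positivity makes `Ĉ` injective on the finite-dimensional space `Sym₂`, hence invertible there.
-/

lemma dot2_eq_sum (A B : M2) : dot2 A B = ∑ α : Fin 2, ∑ β : Fin 2, A α β * B β α := by
  simp [dot2, Matrix.trace, Matrix.mul_apply]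

lemma dot2_smul_left (r : ℝ) (A B : M2) : dot2 (r • A) B = r * dot2 A B := by
  simp [dot2, Matrix.trace_smul]

lemma dot2_smul_right (r : ℝ) (A B : M2) : dot2 A (r • B) = r * dot2 A B := by
  simp [dot2, Matrix.trace_smul]

lemma dot2_sub_left (A A' B : M2) : dot2 (A - A') B = dot2 A B - dot2 A' B := by
  simp [dot2, Matrix.sub_mul, Matrix.trace_sub]

lemma dot2_sub_right (A B B' : M2) : dot2 A (B - B') = dot2 A B - dot2 A B' := by
  simp [dot2, Matrix.mul_sub, Matrix.trace_sub]

lemma dot2_zero_left (B : M2) : dot2 0 B = 0 := by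
  simp [dot2]

lemma dot2_self_eq_trace_conjTranspose_mul {A : M2} (hA : A.IsSymm) :
    dot2 A A = (Aᴴ * A).trace := by
  rw [dot2, conjTranspose_eq_transpose_of_trivial, hA.eq]

lemma dot2_self_nonneg {A : M2} (hA : A.IsSymm) : 0 ≤ dot2 A A := by
  rw [dot2_self_eq_trace_conjTranspose_mul hA]
  exact (posSemidef_conjTranspose_mul_self A).trace_nonneg

lemma dot2_self_pos {A : M2} (hA : A.IsSymm) (h0 : A ≠ 0) : 0 < dot2 A A := by
  refine (dot2_self_nonneg hA).lt_of_ne ?_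
  rw [dot2_self_eq_trace_conjTranspose_mul hA]
  exact fun h => h0 (trace_conjTranspose_mul_self_eq_zero_iff.mp h.symm)

lemma dot2_apply_smul_sub (L : M2 →ₗ[ℝ] M2) (t : ℝ) (X Y : M2) :
    dot2 (L (t • X - Y)) (t • X - Y) =
      t ^ 2 * dot2 (L X) X - t * dot2 (L X) Y - t * dot2 (L Y) X + dot2 (L Y) Y := by
  simp only [map_sub, map_smul, dot2_sub_left, dot2_sub_right, dot2_smul_left, dot2_smul_right]
  ring

lemma integrableOn_dot2 {F : ℝ → M2} {s : Set ℝ}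
    (hF : ∀ α β, IntegrableOn (fun t => F t α β) s) (B : M2) :
    IntegrableOn (fun t => dot2 (F t) B) s := by
  simp only [dot2_eq_sum]
  exact integrable_finsetSum _ fun α _ =>
    integrable_finsetSum _ fun β _ => (hF α β).mul_const _

lemma dot2_eq_integral {F : ℝ → M2} {s : Set ℝ} {M : M2}
    (hM : ∀ α β, M α β = ∫ t in s, F t α β)
    (hF : ∀ α β, IntegrableOn (fun t => F t α β) s) (B : M2) :
    dot2 M B = ∫ t in s, dot2 (F t) B := by
  simp only [dot2_eq_sum]
  rw [integral_finsetSum _ fun α _ =>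
    integrable_finsetSum _ fun β _ => (hF α β).mul_const _]
  refine Finset.sum_congr rfl fun α _ => ?_
  rw [integral_finsetSum _ fun β _ => (hF α β).mul_const _]
  exact Finset.sum_congr rfl fun β _ => by rw [hM, integral_mul_const]

def symmetricSubmodule (n R : Type*) [Semiring R] : Submodule R (Matrix n n R) where
  carrier := {A | A.IsSymm}
  add_mem' hA hB := hA.add hB
  zero_mem' := isSymm_zero
  smul_mem' r _ hA := hA.smul r

lemma injOn_symmetricSubmodule_of_dot2_pos {E : M2 →ₗ[ℝ] M2}
    (hpos : ∀ A : M2, A.IsSymm → A ≠ 0 → 0 < dot2 (E A) A) :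
    Set.InjOn E (symmetricSubmodule (Fin 2) ℝ) := by
  intro A hA A' hA' hAA'
  by_contra hne
  have h := hpos (A - A') (hA.sub hA') (sub_ne_zero.mpr hne)
  rw [map_sub, hAA', sub_self, dot2_zero_left] at h
  exact h.false

theorem LinearMap.exists_invOn_of_injOn {K V : Type*} [Field K] [AddCommGroup V] [Module K V]
    [FiniteDimensional K V] {S : Submodule K V} {E : V →ₗ[K] V}
    (hmaps : Set.MapsTo E S S) (hinj : Set.InjOn E S) :
    ∃ D : V →ₗ[K] V, Set.MapsTo D S S ∧ Set.InvOn D E S S := by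
  let e : S ≃ₗ[K] S := LinearEquiv.ofInjectiveEndo (E.restrict hmaps)
    fun x y h => Subtype.ext (hinj x.2 y.2 (congrArg Subtype.val h))
  obtain ⟨π, hπ⟩ := S.subtype.exists_leftInverse_of_injective S.ker_subtype
  have hπx : ∀ x (hx : x ∈ S), π x = ⟨x, hx⟩ := fun x hx => LinearMap.congr_fun hπ ⟨x, hx⟩
  refine ⟨S.subtype ∘ₗ (e.symm : S →ₗ[K] S) ∘ₗ π, fun x _ => SetLike.coe_mem _, ?_, ?_⟩
  · intro x hx
    have hex : (⟨E x, hmaps hx⟩ : S) = e ⟨x, hx⟩ := rfl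
    show ((e.symm (π (E x)) : S) : V) = x
    rw [hπx _ (hmaps hx), hex, e.symm_apply_apply]
  · intro x hx
    show E (e.symm (π x) : S) = x
    rw [hπx x hx]
    exact congrArg Subtype.val (e.apply_symm_apply ⟨x, hx⟩)

lemma integrableOn_Ioo2_of_continuous {f : ℝ → ℝ} (hf : Continuous f) : IntegrableOn f Ioo2 :=
  hf.integrableOn_Icc.mono_set Set.Ioo_subset_Icc_self

lemma integrableOn_Ioo2_pow_mul {f : ℝ → ℝ} (hf : Measurable f) {M : ℝ}
    (hM : ∀ᵐ t ∂(volume.restrict Ioo2), |f t| ≤ M) (n : ℕ) :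
    IntegrableOn (fun t => t ^ n * f t) Ioo2 := by
  refine Measure.integrableOn_of_bounded (M := M) (by simp [Ioo2, Real.volume_Ioo])
    ((measurable_id.pow_const n).mul hf).aestronglyMeasurable ?_
  filter_upwards [hM, ae_restrict_mem measurableSet_Ioo] with t hft ⟨ht₁, ht₂⟩
  have ht : |t| ≤ 1 := abs_le.mpr ⟨by linarith, by linarith⟩
  rw [Real.norm_eq_abs, abs_mul, abs_pow]
  exact (mul_le_of_le_one_left (abs_nonneg _) (pow_le_one₀ (abs_nonneg t) ht)).trans hft

lemma integral_Ioo2_quadratic (a b g : ℝ) :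
    ∫ t in Ioo2, (a * t ^ 2 + b * t + g) = a / 12 + g := by
  rw [Ioo2, ← integral_Ioc_eq_integral_Ioo,
    ← intervalIntegral.integral_of_le (by norm_num : (-(1:ℝ)/2) ≤ 1/2)]
  have h1 : IntervalIntegrable (fun t : ℝ => a * t ^ 2) volume (-(1:ℝ)/2) (1/2) :=
    (continuous_const.mul (continuous_pow 2)).intervalIntegrable _ _
  have h2 : IntervalIntegrable (fun t : ℝ => b * t) volume (-(1:ℝ)/2) (1/2) :=
    (continuous_const.mul continuous_id).intervalIntegrable _ _
  rw [intervalIntegral.integral_add (h1.add h2) intervalIntegrable_const,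
    intervalIntegral.integral_add h1 h2, intervalIntegral.integral_const_mul,
    intervalIntegral.integral_const_mul, integral_pow, integral_id,
    intervalIntegral.integral_const]
  norm_num
  ring

/-- `Cn` is the `n`-th moment `∫_{−1/2}^{1/2} tⁿ C̄(t) dt` of `Cb`, taken entrywise. -/
def IsMoment (Cb : ℝ → M2 →ₗ[ℝ] M2) (n : ℕ) (Cn : M2 →ₗ[ℝ] M2) : Prop :=
  ∀ (A : M2) (α β : Fin 2), Cn A α β = ∫ t in Ioo2, t ^ n * Cb t A α β

namespace IsMoment

variable {Cb : ℝ → M2 →ₗ[ℝ] M2} {n : ℕ} {Cn : M2 →ₗ[ℝ] M2}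

lemma isSymm_apply (h : IsMoment Cb n Cn)
    (hsymm : ∀ t ∈ Ioo2, ∀ A : M2, A.IsSymm → (Cb t A).IsSymm) {A : M2} (hA : A.IsSymm) :
    (Cn A).IsSymm := by
  ext α β
  rw [transpose_apply, h, h]
  exact setIntegral_congr_fun measurableSet_Ioo fun t ht => by
    rw [(hsymm t ht A hA).apply α β]

variable (hint : ∀ A α β, IntegrableOn (fun t => t ^ n * Cb t A α β) Ioo2)
include hint

lemma integrableOn_pow_mul_dot2 (X Y : M2) :
    IntegrableOn (fun t => t ^ n * dot2 (Cb t X) Y) Ioo2 := by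
  simpa only [dot2_smul_left] using integrableOn_dot2 (F := fun t => t ^ n • Cb t X) (hint X) Y

lemma dot2_eq_integral (h : IsMoment Cb n Cn) (X Y : M2) :
    dot2 (Cn X) Y = ∫ t in Ioo2, t ^ n * dot2 (Cb t X) Y := by
  simpa only [dot2_smul_left] using
    _root_.dot2_eq_integral (F := fun t => t ^ n • Cb t X) (h X) (hint X) Y

end IsMoment

section Schur

variable {Cb : ℝ → M2 →ₗ[ℝ] M2} {C0 C1 C2 : M2 →ₗ[ℝ] M2}
  (hint : ∀ n A α β, IntegrableOn (fun t => t ^ n * Cb t A α β) Ioo2)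
include hint

lemma integrableOn_dot2_apply_smul_sub (X Y : M2) :
    IntegrableOn (fun t => dot2 (Cb t (t • X - Y)) (t • X - Y)) Ioo2 := by
  have hi := fun n => IsMoment.integrableOn_pow_mul_dot2 (hint n)
  refine ((((hi 2 X X).sub (hi 1 X Y)).sub (hi 1 Y X)).add (hi 0 Y Y)).congr_fun
    (fun t _ => ?_) measurableSet_Ioo
  simp only [Pi.add_apply, Pi.sub_apply, dot2_apply_smul_sub, pow_one, pow_zero, one_mul]

lemma integral_dot2_apply_smul_sub (h0 : IsMoment Cb 0 C0) (h1 : IsMoment Cb 1 C1)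
    (h2 : IsMoment Cb 2 C2) (X Y : M2) :
    ∫ t in Ioo2, dot2 (Cb t (t • X - Y)) (t • X - Y) =
      dot2 (C2 X) X - dot2 (C1 X) Y - dot2 (C1 Y) X + dot2 (C0 Y) Y := by
  have hi := fun n => IsMoment.integrableOn_pow_mul_dot2 (hint n)
  have hexp : ∀ t : ℝ, dot2 (Cb t (t • X - Y)) (t • X - Y) = t ^ 2 * dot2 (Cb t X) X
      - t ^ 1 * dot2 (Cb t X) Y - t ^ 1 * dot2 (Cb t Y) X + t ^ 0 * dot2 (Cb t Y) Y := fun t => by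
    rw [dot2_apply_smul_sub]
    ring
  rw [integral_congr_ae (ae_of_all _ hexp), integral_add, integral_sub, integral_sub,
    h2.dot2_eq_integral (hint 2), h1.dot2_eq_integral (hint 1), h1.dot2_eq_integral (hint 1),
    h0.dot2_eq_integral (hint 0)]
  exacts [hi 2 X X, hi 1 X Y, (hi 2 X X).sub (hi 1 X Y), hi 1 Y X,
    ((hi 2 X X).sub (hi 1 X Y)).sub (hi 1 Y X), hi 0 Y Y]

theorem le_dot2_schur_of_coercive {c : ℝ}
    (hcoer : ∀ᵐ t ∂(volume.restrict Ioo2), ∀ A : M2, A.IsSymm →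
      c * dot2 A A ≤ dot2 (Cb t A) A)
    (h0 : IsMoment Cb 0 C0) (h1 : IsMoment Cb 1 C1) (h2 : IsMoment Cb 2 C2)
    {A B : M2} (hA : A.IsSymm) (hB : B.IsSymm) (hAB : C0 B = C1 A) :
    c * dot2 A A / 12 + c * dot2 B B ≤ dot2 (C2 A - C1 B) A := by
  have hquad : ∀ t : ℝ, c * dot2 (t • A - B) (t • A - B) =
      c * dot2 A A * t ^ 2 + -(c * (dot2 A B + dot2 B A)) * t + c * dot2 B B := fun t => by
    simp only [dot2_sub_left, dot2_sub_right, dot2_smul_left, dot2_smul_right]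
    ring
  have hmono := integral_mono_ae
    (f := fun t => c * dot2 A A * t ^ 2 + -(c * (dot2 A B + dot2 B A)) * t + c * dot2 B B)
    (integrableOn_Ioo2_of_continuous (by fun_prop)) (integrableOn_dot2_apply_smul_sub hint A B)
    (hcoer.mono fun t ht => (hquad t).symm.trans_le (ht _ ((hA.smul t).sub hB)))
  rw [integral_Ioo2_quadratic, integral_dot2_apply_smul_sub hint h0 h1 h2, hAB] at hmono
  rw [dot2_sub_left]
  linarith

end Schur

theorem chat_coercive_posDef_invertible_general
    (Cb : ℝ → M2 →ₗ[ℝ] M2) (c : ℝ) (hc : 0 < c)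
    (hmeas : ∀ (A : M2) (α β : Fin 2), Measurable fun t : ℝ => (Cb t A) α β)
    (hbd : ∃ K : ℝ, ∀ᵐ t ∂(volume.restrict Ioo2),
      ∀ (A : M2) (α β : Fin 2), |(Cb t A) α β| ≤ K * ∑ γ : Fin 2, ∑ δ : Fin 2, |A γ δ|)
    (hsymm : ∀ t ∈ Ioo2, ∀ A : M2, A.IsSymm → (Cb t A).IsSymm)
    (hcoer : ∀ᵐ t ∂(volume.restrict Ioo2), ∀ A : M2, A.IsSymm →
      c * dot2 A A ≤ dot2 (Cb t A) A)
    (C0 C1 C2 D0 : M2 →ₗ[ℝ] M2)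
    (hC0 : ∀ (A : M2) (α β : Fin 2), (C0 A) α β = ∫ t in Ioo2, (Cb t A) α β)
    (hC1 : ∀ (A : M2) (α β : Fin 2), (C1 A) α β = ∫ t in Ioo2, t * (Cb t A) α β)
    (hC2 : ∀ (A : M2) (α β : Fin 2), (C2 A) α β = ∫ t in Ioo2, t ^ 2 * (Cb t A) α β)
    (hD0symm : ∀ A : M2, A.IsSymm → (D0 A).IsSymm)
    (hD0r : ∀ A : M2, A.IsSymm → C0 (D0 A) = A) :
    (∀ Ab : M2, Ab.IsSymm →
        c * dot2 Ab Ab ≤ dot2 ((12:ℝ) • (C2 Ab - C1 (D0 (C1 Ab)))) Ab)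
    ∧ (∀ Ab : M2, Ab.IsSymm → Ab ≠ 0 →
        0 < dot2 ((12:ℝ) • (C2 Ab - C1 (D0 (C1 Ab)))) Ab)
    ∧ (∃ Dh : M2 →ₗ[ℝ] M2, ∀ A : M2, A.IsSymm →
        (Dh A).IsSymm
        ∧ Dh ((12:ℝ) • (C2 A - C1 (D0 (C1 A)))) = A
        ∧ (12:ℝ) • (C2 (Dh A) - C1 (D0 (C1 (Dh A)))) = A) := by
  obtain ⟨K, hK⟩ := hbd
  have hint : ∀ n A α β, IntegrableOn (fun t => t ^ n * Cb t A α β) Ioo2 := fun n A α β =>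
    integrableOn_Ioo2_pow_mul (hmeas A α β) (hK.mono fun t ht => ht A α β) n
  have h0 : IsMoment Cb 0 C0 := fun A α β => by simpa using hC0 A α β
  have h1 : IsMoment Cb 1 C1 := fun A α β => by simpa using hC1 A α β
  have h2 : IsMoment Cb 2 C2 := hC2
  have hC1symm := fun (A : M2) (hA : A.IsSymm) => h1.isSymm_apply hsymm hA
  have hcoercive : ∀ A : M2, A.IsSymm →
      c * dot2 A A ≤ dot2 ((12:ℝ) • (C2 A - C1 (D0 (C1 A)))) A := fun A hA => by
    have hB := hD0symm _ (hC1symm A hA)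
    have := le_dot2_schur_of_coercive hint hcoer h0 h1 h2 hA hB (hD0r _ (hC1symm A hA))
    rw [dot2_smul_left]
    linarith [mul_nonneg hc.le (dot2_self_nonneg hB)]
  have hpos : ∀ A : M2, A.IsSymm → A ≠ 0 →
      0 < dot2 ((12:ℝ) • (C2 A - C1 (D0 (C1 A)))) A := fun A hA hA0 =>
    (mul_pos hc (dot2_self_pos hA hA0)).trans_le (hcoercive A hA)
  refine ⟨hcoercive, hpos, ?_⟩
  let E : M2 →ₗ[ℝ] M2 := (12:ℝ) • (C2 - C1 ∘ₗ D0 ∘ₗ C1)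
  have hmaps : Set.MapsTo E (symmetricSubmodule (Fin 2) ℝ) (symmetricSubmodule (Fin 2) ℝ) :=
    fun A hA =>
      ((h2.isSymm_apply hsymm hA).sub (hC1symm _ (hD0symm _ (hC1symm A hA)))).smul (12:ℝ)
  obtain ⟨D, hDmaps, hDleft, hDright⟩ := LinearMap.exists_invOn_of_injOn hmaps
    (injOn_symmetricSubmodule_of_dot2_pos (E := E) hpos)
  exact ⟨D, fun A hA => ⟨hDmaps hA, hDleft hA, hDright hA⟩⟩

/-- Let `C̄ : (−1/2,1/2) → (self-adjoint maps Sym₂ → Sym₂)` be a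
measurable, essentially bounded, uniformly coercive field, let `C̄⁽ⁱ⁾` (i = 0,1,2) be its
moments, `D₀` the inverse of `C̄⁽⁰⁾` on `Sym₂`, and
`Ĉ := 12(C̄⁽²⁾ − C̄⁽¹⁾(C̄⁽⁰⁾)⁻¹C̄⁽¹⁾)`.  Then `ĈĀ·Ā ≥ c|Ā|²` for every symmetric `Ā`;
in particular `Ĉ` is positive definite and invertible on `Sym₂`. -/
theorem chat_coercive_posDef_invertible
    (Cb : ℝ → M2 →ₗ[ℝ] M2) (c : ℝ) (hc : 0 < c)
    (hmeas : ∀ (A : M2) (α β : Fin 2), Measurable fun t : ℝ => (Cb t A) α β)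
    (hbd : ∃ K : ℝ, ∀ᵐ t ∂(volume.restrict Ioo2),
      ∀ (A : M2) (α β : Fin 2), |(Cb t A) α β| ≤ K * ∑ γ : Fin 2, ∑ δ : Fin 2, |A γ δ|)
    (hsymm : ∀ t ∈ Ioo2, ∀ A : M2, A.IsSymm → (Cb t A).IsSymm)
    (hsa : ∀ t ∈ Ioo2, ∀ A B : M2, A.IsSymm → B.IsSymm →
      dot2 (Cb t A) B = dot2 A (Cb t B))
    (hcoer : ∀ᵐ t ∂(volume.restrict Ioo2), ∀ A : M2, A.IsSymm →
      c * dot2 A A ≤ dot2 (Cb t A) A)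
    (C0 C1 C2 D0 : M2 →ₗ[ℝ] M2)
    (hC0 : ∀ (A : M2) (α β : Fin 2), (C0 A) α β = ∫ t in Ioo2, (Cb t A) α β)
    (hC1 : ∀ (A : M2) (α β : Fin 2), (C1 A) α β = ∫ t in Ioo2, t * (Cb t A) α β)
    (hC2 : ∀ (A : M2) (α β : Fin 2), (C2 A) α β = ∫ t in Ioo2, t ^ 2 * (Cb t A) α β)
    (hD0symm : ∀ A : M2, A.IsSymm → (D0 A).IsSymm)
    (hD0l : ∀ A : M2, A.IsSymm → D0 (C0 A) = A)
    (hD0r : ∀ A : M2, A.IsSymm → C0 (D0 A) = A) :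
    (∀ Ab : M2, Ab.IsSymm →
        c * dot2 Ab Ab ≤ dot2 ((12:ℝ) • (C2 Ab - C1 (D0 (C1 Ab)))) Ab)
    ∧ (∀ Ab : M2, Ab.IsSymm → Ab ≠ 0 →
        0 < dot2 ((12:ℝ) • (C2 Ab - C1 (D0 (C1 Ab)))) Ab)
    ∧ (∃ Dh : M2 →ₗ[ℝ] M2, ∀ A : M2, A.IsSymm →
        (Dh A).IsSymm
        ∧ Dh ((12:ℝ) • (C2 A - C1 (D0 (C1 A)))) = A
        ∧ (12:ℝ) • (C2 (Dh A) - C1 (D0 (C1 (Dh A)))) = A) :=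
  chat_coercive_posDef_invertible_general Cb c hc hmeas hbd hsymm hcoer C0 C1 C2 D0 hC0 hC1 hC2
    hD0symm hD0r
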